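/- Let f, g ∈ L^∞(∂D) be scalar symbols. If f̄ ∈ H^∞ or g ∈ H^∞, then T_f T_g = T_{fg} on H². Conversely (Brown–Halmos), if T_f T_g = T_{fg} then f̄ ∈ H^∞ or g ∈ H^∞. -/

import Mathlib

noncomputable section
open MeasureTheory Complex
open scoped InnerProductSpace ComplexConjugate

set_option synthInstance.maxHeartbeats 400000

namespace HardySpace

instance fact_two_pi_pos : Fact (0 < 2 * Real.pi) := ⟨by positivity⟩
abbrev 𝕋 : Type := AddCircle (2 * Real.pi)
abbrev μT : Measure 𝕋 := AddCircle.haarAddCircle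
abbrev L2 : Type := Lp ℂ 2 μT
def cw : 𝕋 → ℂ := fun x => fourier 1 x
def Hardy : Submodule ℂ L2 :=
  (Submodule.span ℂ (Set.range fun n : ℕ => (fourierLp 2 (n : ℤ) : L2))).topologicalClosure
instance : CompleteSpace Hardy :=
  (Submodule.isClosed_topologicalClosure _).isComplete.completeSpace_coe
def Pfull : L2 →L[ℂ] L2 := Hardy.subtypeL.comp (Submodule.orthogonalProjectionOnto Hardy)

open Classical in
/-- The element of `L²` determined by an essentially bounded symbol
(junk value `0` if the function is not essentially bounded). -/
def symbolL2 (g : 𝕋 → ℂ) : L2 :=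
  if hg : MemLp g ⊤ μT then (hg.mono_exponent le_top).toLp g else 0

/-- `g ∈ H^∞`: `g` is essentially bounded and lies in the Hardy space. -/
def InHinf (g : 𝕋 → ℂ) : Prop := MemLp g ⊤ μT ∧ symbolL2 g ∈ Hardy

theorem memMul {f : 𝕋 → ℂ} (hf : MemLp f ⊤ μT) (h : L2) :
    MemLp (fun x => f x * h x) 2 μT := by
  refine ⟨hf.aestronglyMeasurable.mul (Lp.aestronglyMeasurable h), ?_⟩
  have hle := eLpNorm_le_eLpNorm_top_mul_eLpNorm 2 f (Lp.aestronglyMeasurable h)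
    (· * ·) 1 (Filter.Eventually.of_forall fun x => by simp [nnnorm_mul])
  simp only [ENNReal.coe_one, one_mul] at hle
  refine lt_of_le_of_lt hle ?_
  exact ENNReal.mul_lt_top hf.2 (Lp.memLp h).2

open Classical in
/-- Multiplication by an `L^∞` symbol, as a bounded operator on `L²`
(defined to be `0` for symbols that are not essentially bounded). -/
def mulCLM (f : 𝕋 → ℂ) : L2 →L[ℂ] L2 :=
  if hf : MemLp f ⊤ μT then
    LinearMap.mkContinuousOfExistsBound
      { toFun := fun h => (memMul hf h).toLp (fun x => f x * h x)
        map_add' := fun h k => by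
          rw [← MemLp.toLp_add]
          apply MemLp.toLp_congr
          filter_upwards [AEEqFun.coeFn_add (h : 𝕋 →ₘ[μT] ℂ) (k : 𝕋 →ₘ[μT] ℂ)] with x hx
          simp only [show ((h + k : L2) : 𝕋 →ₘ[μT] ℂ) = (h : 𝕋 →ₘ[μT] ℂ) + (k : 𝕋 →ₘ[μT] ℂ)
            from rfl, hx, Pi.add_apply]
          ring
        map_smul' := fun c h => by
          simp only [RingHom.id_apply]
          rw [← MemLp.toLp_const_smul]
          apply MemLp.toLp_congr
          filter_upwards [AEEqFun.coeFn_smul c (h : 𝕋 →ₘ[μT] ℂ)] with x hx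
          simp only [show ((c • h : L2) : 𝕋 →ₘ[μT] ℂ) = c • (h : 𝕋 →ₘ[μT] ℂ) from rfl, hx,
            Pi.smul_apply, smul_eq_mul]
          ring }
      ⟨(eLpNorm f ⊤ μT).toReal, fun h => by
        simp only [LinearMap.coe_mk, AddHom.coe_mk]
        rw [Lp.norm_toLp, Lp.norm_def]
        rw [← ENNReal.toReal_mul]
        refine ENNReal.toReal_mono ?_ ?_
        · exact ENNReal.mul_ne_top hf.2.ne (Lp.memLp h).2.ne
        · simpa using eLpNorm_le_eLpNorm_top_mul_eLpNorm 2 f (Lp.aestronglyMeasurable h)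
            (· * ·) 1 (Filter.Eventually.of_forall fun x => by simp [nnnorm_mul])⟩
  else 0

theorem continuous_cw : Continuous cw := map_continuous (fourier 1)

theorem norm_cw (x : 𝕋) : ‖cw x‖ = 1 := by
  rw [cw, fourier_apply]
  exact Circle.norm_coe _

theorem memVop (h : L2) : MemLp (fun x => conj (cw x) * conj (h x)) 2 μT := by
  refine MemLp.of_le_mul (c := 1) (Lp.memLp h)
    ((continuous_cw.star.aestronglyMeasurable).mul
      (continuous_star.comp_aestronglyMeasurable (Lp.aestronglyMeasurable h)))
    (Filter.Eventually.of_forall fun x => ?_)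
  simp [norm_cw x]

/-- The antiunitary operator `V` on `L²(∂D)` given by `(V h)(w) = conj(w) ⬝ conj(h(w))`. -/
def Vop (h : L2) : L2 := (memVop h).toLp _

/-- The Toeplitz operator `T_f h = P (f h)` on `H²`. -/
def Toeplitz (f : 𝕋 → ℂ) : Hardy →L[ℂ] Hardy :=
  (Submodule.orthogonalProjectionOnto Hardy).comp ((mulCLM f).comp Hardy.subtypeL)

/-- The Hankel operator `H_f h = (I − P)(f h)`, from `H²` into `L²` (with range in `L² ⊖ H²`). -/
def Hankel (f : 𝕋 → ℂ) : Hardy →L[ℂ] L2 :=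
  (ContinuousLinearMap.id ℂ L2 - Pfull).comp ((mulCLM f).comp Hardy.subtypeL)

/-- The Möbius map `φ_z`, viewed as a function on the circle. -/
def phiC (z : ℂ) : 𝕋 → ℂ := fun x => (z - cw x) / (1 - conj z * cw x)

/-- The normalized reproducing kernel `k_z` as a function on the circle. -/
def kfun (z : ℂ) : 𝕋 → ℂ := fun x => (Real.sqrt (1 - ‖z‖ ^ 2) : ℂ) / (1 - conj z * cw x)

/-- The normalized reproducing kernel `k_z` as an element of `L²`. -/
def kz (z : ℂ) : L2 := symbolL2 (kfun z)

/-- The normalized reproducing kernel `k_z` as an element of the Hardy space `H²`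
(for `|z| < 1`, `k_z` lies in `H²`, so this is just `k_z`). -/
def kzH (z : ℂ) : Hardy := Submodule.orthogonalProjectionOnto Hardy (kz z)

/-- The antianalytic part `f₋ = (I − P) f` of a bounded symbol, as a function. -/
def minusPart (f : 𝕋 → ℂ) : 𝕋 → ℂ := (symbolL2 f - Pfull (symbolL2 f) : L2)

/-- The harmonic (Poisson) extension of `h ∈ L¹(∂D)` at `z ∈ D`:
`h(z) = ∫ h(w) (1 − |z|²)/|1 − w z̄|² dσ(w)`. -/
def poisson (h : 𝕋 → ℂ) (z : ℂ) : ℂ :=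
  ∫ x, h x * (((1 - ‖z‖ ^ 2) / ‖1 - cw x * conj z‖ ^ 2 : ℝ) : ℂ) ∂μT

/-- The Poisson extension of a real-valued function. -/
def poissonR (h : 𝕋 → ℝ) (z : ℂ) : ℝ :=
  ∫ x, h x * ((1 - ‖z‖ ^ 2) / ‖1 - cw x * conj z‖ ^ 2) ∂μT

open Classical in
/-- The Möbius map `φ_z` viewed as a self-map of the circle `∂D` (for `|z| < 1`,
`φ_z` maps the circle to itself). -/
def phiT (z : ℂ) : 𝕋 → 𝕋 := fun x =>
  if h : ‖phiC z x‖ = 1 then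
    AddCircle.homeomorphCircle'.symm ⟨phiC z x, mem_sphere_zero_iff_norm.2 h⟩
  else x

/-- `H²(ℂⁿ) = H² ⊕ ⋯ ⊕ H²`. -/
abbrev HardyN (n : ℕ) := PiLp 2 (fun _ : Fin n => Hardy)
/-- `L²(ℂⁿ) = L² ⊕ ⋯ ⊕ L²`. -/
abbrev L2N (n : ℕ) := PiLp 2 (fun _ : Fin n => L2)

instance {n : ℕ} : CompleteSpace (HardyN n) :=
  inferInstance
instance {n : ℕ} : CompleteSpace (L2N n) :=
  inferInstance

/-- The operator `(Fin n × Fin n)`-matrix of operators acting on direct sums. -/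
def matrixCLM {n : ℕ} {A B : Type*} [NormedAddCommGroup A] [NormedAddCommGroup B]
    [NormedSpace ℂ A] [NormedSpace ℂ B] (T : Fin n → Fin n → (A →L[ℂ] B)) :
    (PiLp 2 fun _ : Fin n => A) →L[ℂ] (PiLp 2 fun _ : Fin n => B) :=
  ((PiLp.continuousLinearEquiv 2 ℂ (fun _ : Fin n => B)).symm.toContinuousLinearMap.comp
    (ContinuousLinearMap.pi fun i => ∑ j, (T i j).comp (ContinuousLinearMap.proj j))).comp
    (PiLp.continuousLinearEquiv 2 ℂ (fun _ : Fin n => A)).toContinuousLinearMap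

/-- The block Toeplitz operator `T_F` on `H²(ℂⁿ)`, given by the operator matrix `(T_{f_ij})`. -/
def blockToeplitz {n : ℕ} (F : Fin n → Fin n → 𝕋 → ℂ) : HardyN n →L[ℂ] HardyN n :=
  matrixCLM fun i j => Toeplitz (F i j)

/-- The block Hankel operator `H_F` from `H²(ℂⁿ)` to `L²(ℂⁿ)`, given by the
operator matrix `(H_{f_ij})`. -/
def blockHankel {n : ℕ} (F : Fin n → Fin n → 𝕋 → ℂ) : HardyN n →L[ℂ] L2N n :=
  matrixCLM fun i j => Hankel (F i j)

/-- Pointwise product of matrix symbols. -/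
def symMul {n : ℕ} (F G : Fin n → Fin n → 𝕋 → ℂ) : Fin n → Fin n → 𝕋 → ℂ :=
  fun i j x => ∑ k, F i k x * G k j x

/-- Pointwise conjugate transpose `F*` of a matrix symbol. -/
def symStar {n : ℕ} (F : Fin n → Fin n → 𝕋 → ℂ) : Fin n → Fin n → 𝕋 → ℂ :=
  fun i j x => conj (F j i x)

/-- The rank-one operator `x ⊗ y` given by `(x ⊗ y) f = ⟨f, y⟩ x`, where the inner
product `⟨·,·⟩` is linear in the first argument. -/
def rankOne {E F : Type*} [NormedAddCommGroup E] [InnerProductSpace ℂ E]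
    [NormedAddCommGroup F] [InnerProductSpace ℂ F] (x : F) (y : E) : E →L[ℂ] F :=
  (innerSL ℂ y).smulRight x

/-!
Splitting `⟪f̄ u, g v⟫` along `L² = H² ⊕ (H²)ᗮ` gives the identity
`T_{fg} - T_f T_g = H_{f̄}^* H_g`, so `T_f T_g = T_{fg}` exactly when `⟪H_{f̄} u, H_g v⟫` vanishes
for all `u, v ∈ H²`. A Hankel operator with symbol in `H^∞` is zero. Conversely, by Parseval,
`⟪H_{f̄} zⁱ, H_g zʲ⟫ = ∑_{m ≥ 0} f̂(i + m + 1) ĝ(-j - m - 1)`; subtracting the sum for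
`(i + 1, j + 1)` leaves `f̂(i + 1) ĝ(-j - 1) = 0` for all `i, j ≥ 0`, so either every negative
Fourier coefficient of `g` or every positive Fourier coefficient of `f` vanishes.
-/

end HardySpace

theorem eq_zero_of_forall_hasSum_diag {G : Type*} [AddCommGroup G] [TopologicalSpace G]
    [IsTopologicalAddGroup G] [T2Space G] {F : ℕ → ℕ → G}
    (hF : ∀ i j, HasSum (fun m => F (i + m) (j + m)) 0) (i j : ℕ) : F i j = 0 := by
  have htail := (hasSum_nat_add_iff' 1).2 (hF i j)
  simp only [Finset.range_one, Finset.sum_singleton, add_zero, zero_sub] at htail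
  have := htail.unique (by simpa only [add_right_comm _ 1, add_assoc] using hF (i + 1) (j + 1))
  simpa using this

theorem Submodule.inner_eq_inner_starProjection_add {𝕜 E : Type*} [RCLike 𝕜]
    [NormedAddCommGroup E] [InnerProductSpace 𝕜 E] (K : Submodule 𝕜 E)
    [K.HasOrthogonalProjection] (x y : E) :
    inner 𝕜 x y = inner 𝕜 (K.starProjection x) (K.starProjection y)
      + inner 𝕜 (x - K.starProjection x) (y - K.starProjection y) := by
  have h₁ : inner 𝕜 (K.starProjection x) (y - K.starProjection y) = 0 := by
    rw [← inner_conj_symm, K.starProjection_inner_eq_zero _ _ (K.starProjection_apply_mem x),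
      map_zero]
  have h₂ : inner 𝕜 (x - K.starProjection x) (K.starProjection y) = 0 :=
    K.starProjection_inner_eq_zero _ _ (K.starProjection_apply_mem y)
  conv_lhs =>
    rw [← add_sub_cancel (K.starProjection x) x, ← add_sub_cancel (K.starProjection y) y]
  rw [inner_add_left, inner_add_right, inner_add_right, h₁, h₂]
  ring

section FourierCoeff

variable {T : ℝ} [Fact (0 < T)]

theorem fourierCoeff_mul_fourier (p : AddCircle T → ℂ) (m n : ℤ) :
    fourierCoeff (fun x => p x * fourier m x) n = fourierCoeff p (n - m) := by
  refine integral_congr_ae (Filter.Eventually.of_forall fun x => ?_)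
  simp only [smul_eq_mul]
  rw [show -(n - m) = -n + m by ring, fourier_add]
  ring

theorem fourierCoeff_conj (p : AddCircle T → ℂ) (n : ℤ) :
    fourierCoeff (fun x => conj (p x)) n = conj (fourierCoeff p (-n)) := by
  rw [fourierCoeff, fourierCoeff, ← integral_conj]
  refine integral_congr_ae (Filter.Eventually.of_forall fun x => ?_)
  simp only [smul_eq_mul, neg_neg, map_mul, ← fourier_neg]

theorem inner_fourierLp (n : ℤ) (h : Lp ℂ 2 (AddCircle.haarAddCircle (T := T))) :
    ⟪fourierLp 2 n, h⟫_ℂ = fourierCoeff h n := by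
  rw [← fourierBasis_repr, fourierBasis.repr_apply_apply, coe_fourierBasis]

end FourierCoeff

namespace HardySpace

section Symbols

variable {f g : 𝕋 → ℂ}

theorem coeFn_mulCLM (hf : MemLp f ⊤ μT) (h : L2) :
    (mulCLM f h : 𝕋 → ℂ) =ᵐ[μT] fun x => f x * h x := by
  rw [mulCLM, dif_pos hf]
  exact (memMul hf h).coeFn_toLp

theorem coeFn_symbolL2 (hg : MemLp g ⊤ μT) : (symbolL2 g : 𝕋 → ℂ) =ᵐ[μT] g := by
  rw [symbolL2, dif_pos hg]
  exact MemLp.coeFn_toLp _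

theorem mulCLM_mulCLM (hf : MemLp f ⊤ μT) (hg : MemLp g ⊤ μT) (h : L2) :
    mulCLM f (mulCLM g h) = mulCLM (fun x => f x * g x) h := by
  apply Lp.ext
  filter_upwards [coeFn_mulCLM hf (mulCLM g h), coeFn_mulCLM hg h,
    coeFn_mulCLM (f := fun x => f x * g x) (hg.mul hf) h] with x h₁ h₂ h₃
  rw [h₁, h₂, h₃, mul_assoc]

theorem inner_mulCLM_right (hf : MemLp f ⊤ μT) (u v : L2) :
    ⟪u, mulCLM f v⟫_ℂ = ⟪mulCLM (fun x => conj (f x)) u, v⟫_ℂ := by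
  rw [L2.inner_def, L2.inner_def]
  refine integral_congr_ae ?_
  filter_upwards [coeFn_mulCLM hf v, coeFn_mulCLM (f := fun x => conj (f x)) hf.star u]
    with x h₁ h₂
  rw [RCLike.inner_apply, RCLike.inner_apply, h₁, h₂, map_mul, Complex.conj_conj]
  ring

theorem inner_fourierLp_mulCLM_fourierLp (hg : MemLp g ⊤ μT) (k n : ℤ) :
    ⟪fourierLp 2 k, mulCLM g (fourierLp 2 n)⟫_ℂ = fourierCoeff g (k - n) := by
  rw [inner_fourierLp, fourierCoeff_congr_ae (coeFn_mulCLM hg _), ← fourierCoeff_mul_fourier]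
  refine congrFun (fourierCoeff_congr_ae ?_) k
  filter_upwards [coeFn_fourierLp 2 n] with x hx
  rw [hx]

end Symbols

theorem toeplitz_apply_coe (p : 𝕋 → ℂ) (w : Hardy) :
    (Toeplitz p w : L2) = Hardy.starProjection (mulCLM p w) :=
  rfl

theorem hankel_apply (p : 𝕋 → ℂ) (w : Hardy) :
    Hankel p w = mulCLM p w - Hardy.starProjection (mulCLM p w) :=
  rfl

theorem inner_toeplitz_mul {f g : 𝕋 → ℂ} (hf : MemLp f ⊤ μT) (hg : MemLp g ⊤ μT)
    (u v : Hardy) :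
    ⟪u, Toeplitz (fun x => f x * g x) v⟫_ℂ
      = ⟪u, Toeplitz f (Toeplitz g v)⟫_ℂ + ⟪Hankel (fun x => conj (f x)) u, Hankel g v⟫_ℂ := by
  have hT (p : 𝕋 → ℂ) (w : Hardy) : ⟪u, Toeplitz p w⟫_ℂ = ⟪(u : L2), mulCLM p w⟫_ℂ :=
    Submodule.inner_orthogonalProjectionOnto_eq_of_mem_left _ _
  set x := mulCLM (fun x => conj (f x)) u
  set y := mulCLM g v
  have hproj :
      ⟪Hardy.starProjection x, Hardy.starProjection y⟫_ℂ = ⟪x, Hardy.starProjection y⟫_ℂ := by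
    rw [Hardy.inner_starProjection_left_eq_right,
      Submodule.starProjection_eq_self_iff.2 (Hardy.starProjection_apply_mem y)]
  rw [hT, hT, ← mulCLM_mulCLM hf hg, inner_mulCLM_right hf, inner_mulCLM_right hf,
    hankel_apply, hankel_apply, toeplitz_apply_coe, Hardy.inner_eq_inner_starProjection_add x,
    hproj]

theorem toeplitz_comp_eq_iff_inner_hankel {f g : 𝕋 → ℂ} (hf : MemLp f ⊤ μT)
    (hg : MemLp g ⊤ μT) :
    (Toeplitz f).comp (Toeplitz g) = Toeplitz (fun x => f x * g x) ↔
      ∀ u v : Hardy, ⟪Hankel (fun x => conj (f x)) u, Hankel g v⟫_ℂ = 0 := by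
  constructor
  · intro h u v
    simpa [← h] using inner_toeplitz_mul hf hg u v
  · intro h
    ext1 v
    refine ext_inner_left ℂ fun u => ?_
    rw [ContinuousLinearMap.comp_apply, inner_toeplitz_mul hf hg, h, add_zero]

theorem fourierLp_mem_hardy (n : ℕ) : fourierLp 2 (n : ℤ) ∈ Hardy :=
  Submodule.le_topologicalClosure _ (Submodule.subset_span ⟨n, rfl⟩)

theorem isClosed_hardy : IsClosed (Hardy : Set L2) :=
  Submodule.isClosed_topologicalClosure _

theorem mem_hardy_iff {h : L2} :
    h ∈ Hardy ↔ ∀ n : ℕ, ⟪fourierLp 2 (Int.negSucc n), h⟫_ℂ = 0 := by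
  constructor
  · intro hh n
    have hker :
        Hardy ≤ LinearMap.ker (innerSL ℂ (fourierLp 2 (Int.negSucc n) : L2) : L2 →ₗ[ℂ] ℂ) := by
      refine Submodule.topologicalClosure_minimal _ (Submodule.span_le.2 ?_)
        (ContinuousLinearMap.isClosed_ker _)
      rintro - ⟨k, rfl⟩
      exact orthonormal_fourier.2 (by omega)
    exact hker hh
  · intro hc
    refine isClosed_hardy.mem_of_tendsto (hasSum_fourier_series_L2 h)
      (Filter.Eventually.of_forall fun s => Submodule.sum_mem _ fun k _ => ?_)
    cases k with
    | ofNat m => exact Submodule.smul_mem _ _ (fourierLp_mem_hardy m)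
    | negSucc m => rw [← inner_fourierLp, hc, zero_smul]; exact Hardy.zero_mem

theorem inHinf_iff {g : 𝕋 → ℂ} (hg : MemLp g ⊤ μT) :
    InHinf g ↔ ∀ n : ℕ, fourierCoeff g (Int.negSucc n) = 0 := by
  simp only [InHinf, hg, true_and, mem_hardy_iff, inner_fourierLp,
    fourierCoeff_congr_ae (coeFn_symbolL2 hg)]

theorem inHinf_conj_iff {f : 𝕋 → ℂ} (hf : MemLp f ⊤ μT) :
    InHinf (fun x => conj (f x)) ↔ ∀ n : ℕ, fourierCoeff f (n + 1 : ℕ) = 0 := by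
  simp only [inHinf_iff (g := fun x => conj (f x)) hf.star, fourierCoeff_conj, Int.neg_negSucc,
    map_eq_zero]

theorem mulCLM_mem_hardy {g : 𝕋 → ℂ} (hg : InHinf g) {h : L2} (hh : h ∈ Hardy) :
    mulCLM g h ∈ Hardy := by
  suffices Hardy ≤ Hardy.comap (mulCLM g : L2 →ₗ[ℂ] L2) from this hh
  refine Submodule.topologicalClosure_minimal _ (Submodule.span_le.2 ?_)
    (isClosed_hardy.preimage (mulCLM g).continuous)
  rintro - ⟨n, rfl⟩
  refine mem_hardy_iff.2 fun k => ?_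
  change ⟪_, mulCLM g (fourierLp 2 n)⟫_ℂ = 0
  rw [inner_fourierLp_mulCLM_fourierLp hg.1,
    show Int.negSucc k - n = Int.negSucc (k + n) by omega]
  exact (inHinf_iff hg.1).1 hg _

theorem hankel_eq_zero_of_inHinf {g : 𝕋 → ℂ} (hg : InHinf g) : Hankel g = 0 := by
  ext1 h
  rw [hankel_apply]
  exact sub_eq_zero.2 (Submodule.starProjection_eq_self_iff.2 (mulCLM_mem_hardy hg h.2)).symm

theorem hasSum_inner_sub_starProjection (x y : L2) :
    HasSum
      (fun m : ℕ => ⟪x, fourierLp 2 (Int.negSucc m)⟫_ℂ * ⟪fourierLp 2 (Int.negSucc m), y⟫_ℂ)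
      ⟪x - Hardy.starProjection x, y - Hardy.starProjection y⟫_ℂ := by
  have hperp (z : L2) (n : ℕ) : ⟪fourierLp 2 (n : ℤ), z - Hardy.starProjection z⟫_ℂ = 0 :=
    Submodule.inner_right_of_mem_orthogonal (fourierLp_mem_hardy n)
      (Hardy.sub_starProjection_mem_orthogonal z)
  have hneg (z : L2) (m : ℕ) :
      ⟪fourierLp 2 (Int.negSucc m), z - Hardy.starProjection z⟫_ℂ
        = ⟪fourierLp 2 (Int.negSucc m), z⟫_ℂ := by
    rw [inner_sub_right, mem_hardy_iff.1 (Hardy.starProjection_apply_mem z), sub_zero]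
  have hParseval := fourierBasis.hasSum_inner_mul_inner (x - Hardy.starProjection x)
    (y - Hardy.starProjection y)
  simp only [coe_fourierBasis] at hParseval
  refine ((Function.Injective.hasSum_iff (fun _ _ => Int.negSucc.inj)
    fun k hk => ?_).2 hParseval).congr_fun fun m => ?_
  · obtain ⟨n, rfl⟩ : ∃ n : ℕ, k = n := ⟨k.toNat, by cases k <;> simp_all⟩
    rw [hperp, mul_zero]
  · rw [Function.comp_apply, hneg, ← inner_conj_symm (x - _), hneg, inner_conj_symm]

def fourierHardy (n : ℕ) : Hardy := ⟨fourierLp 2 (n : ℤ), fourierLp_mem_hardy n⟩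

theorem hasSum_inner_hankel_fourierHardy {f g : 𝕋 → ℂ} (hf : MemLp f ⊤ μT)
    (hg : MemLp g ⊤ μT) (i j : ℕ) :
    HasSum (fun m : ℕ => fourierCoeff f (i + m + 1 : ℕ) * fourierCoeff g (Int.negSucc (j + m)))
      ⟪Hankel (fun x => conj (f x)) (fourierHardy i), Hankel g (fourierHardy j)⟫_ℂ := by
  rw [hankel_apply, hankel_apply]
  refine (hasSum_inner_sub_starProjection _ _).congr_fun fun m => ?_
  rw [← inner_conj_symm, fourierHardy, fourierHardy,
    inner_fourierLp_mulCLM_fourierLp (g := fun x => conj (f x)) hf.star,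
    inner_fourierLp_mulCLM_fourierLp hg, fourierCoeff_conj, Complex.conj_conj]
  congr 2 <;> omega

/-- Brown–Halmos: for scalar symbols `f, g ∈ L^∞`, `T_f T_g = T_{fg}` if and only if
`f̄ ∈ H^∞` or `g ∈ H^∞`. -/
theorem toeplitz_comp_eq_iff (f g : 𝕋 → ℂ) (hf : MemLp f ⊤ μT) (hg : MemLp g ⊤ μT) :
    (InHinf (fun x => conj (f x)) ∨ InHinf g) ↔
      (Toeplitz f).comp (Toeplitz g) = Toeplitz fun x => f x * g x := by
  rw [toeplitz_comp_eq_iff_inner_hankel hf hg]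
  constructor
  · rintro (hfa | hga) u v
    · rw [hankel_eq_zero_of_inHinf hfa, zero_apply, inner_zero_left]
    · rw [hankel_eq_zero_of_inHinf hga, zero_apply, inner_zero_right]
  · intro h
    have hprod : ∀ i j : ℕ,
        fourierCoeff f (i + 1 : ℕ) * fourierCoeff g (Int.negSucc j) = 0 :=
      eq_zero_of_forall_hasSum_diag fun i j =>
        h (fourierHardy i) (fourierHardy j) ▸ hasSum_inner_hankel_fourierHardy hf hg i j
    rw [inHinf_conj_iff hf, inHinf_iff hg, or_iff_not_imp_right, not_forall]
    rintro ⟨j, hj⟩ i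
    exact (mul_eq_zero.1 (hprod i j)).resolve_right hj

end HardySpace
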